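/- arXiv:2211.00824 — 2 statements merged into one kernel-verified Lean document; each statement's English description precedes it below -/
import Mathlib

section
/- For any joint distribution of random variables X and Y on finite spaces with Y discrete, there exists a random variable N (on a possibly enlarged probability space) such that N is independent of Y and X is a deterministic (measurable) function of the pair (Y, N). -/
open Real

noncomputable def mass {Ω α : Type*} [Fintype Ω] [DecidableEq α]
    (p : Ω → ℝ) (X : Ω → α) (x : α) : ℝ :=
  ∑ ω, if X ω = x then p ω else 0

noncomputable def ent {Ω α : Type*} [Fintype Ω] [Fintype α] [DecidableEq α]
    (p : Ω → ℝ) (X : Ω → α) : ℝ :=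
  ∑ x, Real.negMulLog (mass p X x)

noncomputable def condEnt {Ω α β : Type*} [Fintype Ω] [Fintype α] [Fintype β]
    [DecidableEq α] [DecidableEq β] (p : Ω → ℝ) (X : Ω → α) (Y : Ω → β) : ℝ :=
  ent p (fun ω => (X ω, Y ω)) - ent p Y

noncomputable def mi {Ω α β : Type*} [Fintype Ω] [Fintype α] [Fintype β]
    [DecidableEq α] [DecidableEq β] (p : Ω → ℝ) (X : Ω → α) (Y : Ω → β) : ℝ :=
  ent p X + ent p Y - ent p (fun ω => (X ω, Y ω))

noncomputable def cmi {Ω α β γ : Type*} [Fintype Ω] [Fintype α] [Fintype β] [Fintype γ]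
    [DecidableEq α] [DecidableEq β] [DecidableEq γ]
    (p : Ω → ℝ) (A : Ω → α) (B : Ω → β) (C : Ω → γ) : ℝ :=
  condEnt p A C - condEnt p A (fun ω => (B ω, C ω))

/-!
The noise is a random function `N : 𝒴 → 𝒳`, and `X = N Y`. Draw `ω`, set `N (Y ω) := X ω`, and
draw the other values `N y` independently from the conditional laws of `X` given `Y = y`. Since
pinning the coordinate `Y ω` reproduces the conditional law of `X` at `Y ω`, the pair `(Y, N)`
has the product law `P_Y ⊗ ∏_y P_{X | Y = y}`, so `N` is independent of `Y`; and `X = N Y` on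
the support, so `H(X | Y, N) = 0`.
-/

section Mass

variable {Ω α β : Type*} [Fintype Ω] [DecidableEq α] [DecidableEq β]

theorem mass_nonneg {p : Ω → ℝ} (hp : ∀ ω, 0 ≤ p ω) (A : Ω → α) (a : α) :
    0 ≤ mass p A a :=
  Finset.sum_nonneg fun ω _ => by split_ifs <;> simp [hp ω]

theorem sum_mass [Fintype α] (p : Ω → ℝ) (A : Ω → α) : ∑ a, mass p A a = ∑ ω, p ω := by
  unfold mass
  rw [Finset.sum_comm]
  simp

theorem sum_mass_pair_right [Fintype β] (p : Ω → ℝ) (A : Ω → α) (B : Ω → β) (a : α) :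
    ∑ b, mass p (fun ω => (A ω, B ω)) (a, b) = mass p A a := by
  unfold mass
  rw [Finset.sum_comm]
  simp [Prod.ext_iff, ite_and]

theorem sum_mass_pair_left [Fintype α] (p : Ω → ℝ) (A : Ω → α) (B : Ω → β) (b : β) :
    ∑ a, mass p (fun ω => (A ω, B ω)) (a, b) = mass p B b := by
  unfold mass
  rw [Finset.sum_comm]
  simp [Prod.ext_iff, ite_and]

theorem mass_pair_of_eq_comp {p : Ω → ℝ} {A : Ω → α} {B : Ω → β} {g : β → α}
    (h : ∀ ω, p ω ≠ 0 → A ω = g (B ω)) (a : α) (b : β) :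
    mass p (fun ω => (A ω, B ω)) (a, b) = if a = g b then mass p B b else 0 := by
  unfold mass
  split_ifs with hab
  · refine Finset.sum_congr rfl fun ω _ => ?_
    by_cases hp : p ω = 0
    · simp [hp]
    · by_cases hB : B ω = b <;> simp [hB, h ω hp, hab]
  · refine Finset.sum_eq_zero fun ω _ => ?_
    by_cases hp : p ω = 0
    · simp [hp]
    · simp only [Prod.mk.injEq, ite_eq_right_iff, and_imp]
      rintro rfl rfl
      exact absurd (h ω hp) hab

variable [Fintype α] [Fintype β]

theorem condEnt_eq_zero_of_eq_comp {p : Ω → ℝ} {A : Ω → α} {B : Ω → β} {g : β → α}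
    (h : ∀ ω, p ω ≠ 0 → A ω = g (B ω)) : condEnt p A B = 0 := by
  rw [condEnt, sub_eq_zero, ent, Fintype.sum_prod_type, Finset.sum_comm, ent]
  refine Finset.sum_congr rfl fun b _ => ?_
  simp only [mass_pair_of_eq_comp h, apply_ite negMulLog, negMulLog_zero, Finset.sum_ite_eq',
    Finset.mem_univ, if_true]

theorem mi_eq_zero_of_mass_pair_eq_mul {p : Ω → ℝ} (hsum : ∑ ω, p ω = 1) {A : Ω → α}
    {B : Ω → β} (h : ∀ a b, mass p (fun ω => (A ω, B ω)) (a, b) = mass p A a * mass p B b) :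
    mi p A B = 0 := by
  have hA : ∑ a, mass p A a = 1 := (sum_mass p A).trans hsum
  have hB : ∑ b, mass p B b = 1 := (sum_mass p B).trans hsum
  have hAB : ent p (fun ω => (A ω, B ω)) = ent p A + ent p B := by
    simp only [ent, Fintype.sum_prod_type, h, negMulLog_mul, Finset.sum_add_distrib,
      ← Finset.sum_mul, ← Finset.mul_sum, hA, hB, one_mul]
  rw [mi, hAB, sub_self]

end Mass

section Product

variable {Ω Γ α : Type*} [Fintype Ω] [Fintype Γ] [DecidableEq α]

theorem mass_fst [DecidableEq Ω] (p : Ω × Γ → ℝ) (ω : Ω) :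
    mass p Prod.fst ω = ∑ g, p (ω, g) := by
  rw [mass, Fintype.sum_prod_type, Fintype.sum_eq_single ω] <;> simp_all

theorem mass_pair_comp_fst_snd [DecidableEq Γ] (p : Ω × Γ → ℝ) (A : Ω → α) (a : α) (g : Γ) :
    mass p (fun z => (A z.1, z.2)) (a, g) = mass (fun ω => p (ω, g)) A a := by
  simp [mass, Fintype.sum_prod_type, Prod.ext_iff, ite_and]

end Product

section Coupling

variable {Ω α β : Type*} [Fintype Ω] [DecidableEq α] [DecidableEq β]
  {p : Ω → ℝ} (X : Ω → α) (Y : Ω → β)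

variable (p) in
/-- The conditional law of `X` given `Y = y`; on a null event `{Y = y}` any probability vector
would do, and we take the law of `X`. -/
noncomputable def condLaw (y : β) (x : α) : ℝ :=
  if mass p Y y = 0 then mass p X x else mass p (fun ω => (Y ω, X ω)) (y, x) / mass p Y y

theorem condLaw_nonneg (hp : ∀ ω, 0 ≤ p ω) (y : β) (x : α) : 0 ≤ condLaw p X Y y x := by
  unfold condLaw
  split_ifs
  · exact mass_nonneg hp X x
  · exact div_nonneg (mass_nonneg hp _ _) (mass_nonneg hp Y y)

theorem sum_condLaw [Fintype α] (hsum : ∑ ω, p ω = 1) (y : β) : ∑ x, condLaw p X Y y x = 1 := by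
  unfold condLaw
  split_ifs with h
  · rw [sum_mass, hsum]
  · rw [← Finset.sum_div, sum_mass_pair_right, div_self h]

theorem mass_pair_eq_mul_condLaw [Fintype α] (hp : ∀ ω, 0 ≤ p ω) (y : β) (x : α) :
    mass p (fun ω => (Y ω, X ω)) (y, x) = mass p Y y * condLaw p X Y y x := by
  unfold condLaw
  split_ifs with h
  · have hsum : ∑ x', mass p (fun ω => (Y ω, X ω)) (y, x') = 0 := by
      rw [sum_mass_pair_right, h]
    rw [h, zero_mul]
    exact (Finset.sum_eq_zero_iff_of_nonneg fun x' _ => mass_nonneg hp _ _).1 hsum x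
      (Finset.mem_univ x)
  · rw [mul_div_cancel₀ _ h]

variable (p) in
noncomputable def pinnedLaw (ω : Ω) (y : β) (x : α) : ℝ :=
  if y = Y ω then (if x = X ω then 1 else 0) else condLaw p X Y y x

theorem prod_pinnedLaw [Fintype β] (ω : Ω) (f : β → α) :
    ∏ y, pinnedLaw p X Y ω y (f y) =
      (if f (Y ω) = X ω then 1 else 0) * ∏ y ∈ Finset.univ.erase (Y ω), condLaw p X Y y (f y) := by
  rw [← Finset.mul_prod_erase _ _ (Finset.mem_univ (Y ω))]
  congr 1
  · simp [pinnedLaw]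
  · exact Finset.prod_congr rfl fun y hy => if_neg (Finset.ne_of_mem_erase hy)

theorem sum_pinnedLaw [Fintype α] (hsum : ∑ ω, p ω = 1) (ω : Ω) (y : β) :
    ∑ x, pinnedLaw p X Y ω y x = 1 := by
  unfold pinnedLaw
  split_ifs
  · simp
  · exact sum_condLaw X Y hsum y

variable [Fintype β]

variable (p) in
noncomputable def noiseLaw (f : β → α) : ℝ :=
  ∏ y, condLaw p X Y y (f y)

variable (p) in
noncomputable def coupling (z : Ω × (β → α)) : ℝ :=
  p z.1 * ∏ y, pinnedLaw p X Y z.1 y (z.2 y)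

theorem coupling_nonneg (hp : ∀ ω, 0 ≤ p ω) (z : Ω × (β → α)) : 0 ≤ coupling p X Y z := by
  refine mul_nonneg (hp z.1) (Finset.prod_nonneg fun y _ => ?_)
  unfold pinnedLaw
  split_ifs
  exacts [zero_le_one, le_rfl, condLaw_nonneg X Y hp _ _]

theorem eq_of_coupling_ne_zero {z : Ω × (β → α)} (hz : coupling p X Y z ≠ 0) :
    X z.1 = z.2 (Y z.1) := by
  by_contra hne
  apply hz
  rw [coupling, prod_pinnedLaw, if_neg (Ne.symm hne), zero_mul, mul_zero]

variable [Fintype α]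

theorem sum_noiseLaw (hsum : ∑ ω, p ω = 1) : ∑ f, noiseLaw p X Y f = 1 := by
  simp only [noiseLaw, ← Fintype.prod_sum, sum_condLaw X Y hsum, Finset.prod_const_one]

theorem mass_coupling_fst [DecidableEq Ω] (hsum : ∑ ω, p ω = 1) (ω : Ω) :
    mass (coupling p X Y) Prod.fst ω = p ω := by
  simp only [mass_fst, coupling, ← Finset.mul_sum, ← Fintype.prod_sum, sum_pinnedLaw X Y hsum,
    Finset.prod_const_one, mul_one]

theorem sum_coupling (hsum : ∑ ω, p ω = 1) : ∑ z, coupling p X Y z = 1 := by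
  classical
  rw [← sum_mass _ Prod.fst]
  simp only [mass_coupling_fst X Y hsum, hsum]

theorem mass_coupling_pair (hp : ∀ ω, 0 ≤ p ω) (y : β) (f : β → α) :
    mass (coupling p X Y) (fun z => (Y z.1, z.2)) (y, f) = mass p Y y * noiseLaw p X Y f := by
  set R := ∏ y' ∈ Finset.univ.erase y, condLaw p X Y y' (f y')
  calc mass (coupling p X Y) (fun z => (Y z.1, z.2)) (y, f)
      = ∑ ω, if (Y ω, X ω) = (y, f y) then p ω * R else 0 := by
        rw [mass_pair_comp_fst_snd, mass]
        refine Finset.sum_congr rfl fun ω _ => ?_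
        by_cases hY : Y ω = y
        · subst hY
          simp [coupling, prod_pinnedLaw, R, eq_comm]
        · simp [hY]
    _ = mass p (fun ω => (Y ω, X ω)) (y, f y) * R := by
        rw [mass, Finset.sum_mul]
        simp only [ite_mul, zero_mul]
    _ = mass p Y y * noiseLaw p X Y f := by
        rw [mass_pair_eq_mul_condLaw X Y hp, noiseLaw,
          ← Finset.mul_prod_erase _ _ (Finset.mem_univ y), mul_assoc]

theorem mass_coupling_comp_fst (hp : ∀ ω, 0 ≤ p ω) (hsum : ∑ ω, p ω = 1) (y : β) :
    mass (coupling p X Y) (fun z => Y z.1) y = mass p Y y := by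
  rw [← sum_mass_pair_right _ _ Prod.snd]
  simp only [mass_coupling_pair X Y hp, ← Finset.mul_sum, sum_noiseLaw X Y hsum, mul_one]

theorem mass_coupling_snd (hp : ∀ ω, 0 ≤ p ω) (hsum : ∑ ω, p ω = 1) (f : β → α) :
    mass (coupling p X Y) Prod.snd f = noiseLaw p X Y f := by
  rw [← sum_mass_pair_left _ (fun z => Y z.1)]
  simp only [mass_coupling_pair X Y hp, ← Finset.sum_mul, sum_mass, hsum, one_mul]

end Coupling

theorem stmt_0 {Ω 𝒳 𝒴 : Type} [Fintype Ω] [DecidableEq Ω]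
    [Fintype 𝒳] [DecidableEq 𝒳] [Fintype 𝒴] [DecidableEq 𝒴]
    (p : Ω → ℝ) (hp : ∀ ω, 0 ≤ p ω) (hsum : ∑ ω, p ω = 1)
    (X : Ω → 𝒳) (Y : Ω → 𝒴) :
    ∃ (Ω' : Type) (_ : Fintype Ω') (𝒩 : Type) (_ : Fintype 𝒩) (_ : DecidableEq 𝒩)
      (p' : Ω' → ℝ) (proj : Ω' → Ω) (N : Ω' → 𝒩),
      (∀ ω', 0 ≤ p' ω') ∧ (∑ ω', p' ω' = 1) ∧
      (∀ ω, mass p' proj ω = p ω) ∧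
      mi p' (fun ω' => Y (proj ω')) N = 0 ∧
      condEnt p' (fun ω' => X (proj ω')) (fun ω' => (Y (proj ω'), N ω')) = 0 := by
  refine ⟨Ω × (𝒴 → 𝒳), inferInstance, 𝒴 → 𝒳, inferInstance, inferInstance, coupling p X Y,
    Prod.fst, Prod.snd, coupling_nonneg X Y hp, sum_coupling X Y hsum,
    mass_coupling_fst X Y hsum, ?_, ?_⟩
  · refine mi_eq_zero_of_mass_pair_eq_mul (sum_coupling X Y hsum) fun y f => ?_
    rw [mass_coupling_pair X Y hp, mass_coupling_comp_fst X Y hp hsum,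
      mass_coupling_snd X Y hp hsum]
  · exact condEnt_eq_zero_of_eq_comp (g := fun yf => yf.2 yf.1) fun _ =>
      eq_of_coupling_ne_zero X Y
end

section
/- Under the hypotheses H(Y|X)=0, I(Y;N)=0, H(X|Y,N)=0, I(X';Y)=I(X;Y), and I(X';N) ≤ ε, the augmentation X' is ε-minimal sufficient for Y among representations of X: for every random variable X̃ with I(X̃;Y)=I(X;Y) and with (Y,N) → X → X̃ a Markov chain, we have I(X'; X) ≤ I(X̃; X) + ε. -/
/-!
Since `Y` is a function of `X`, `I(X;Y) = H(Y)`, and data processing gives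
`I(X̃;X) ≥ I(X̃;Y) = H(Y)`. Since `X` is a function of `(Y,N)` and `Y` is independent of `N`,
`I(X';X) ≤ I(X';(Y,N)) ≤ H(Y|N) + I(X';N) = H(Y) + I(X';N) ≤ H(Y) + ε`.
-/

open Real

open Finset

theorem negMulLog_sum_le_sum_negMulLog {ι : Type*} (s : Finset ι) (x : ι → ℝ)
    (hx : ∀ i ∈ s, 0 ≤ x i) : negMulLog (∑ i ∈ s, x i) ≤ ∑ i ∈ s, negMulLog (x i) := by
  rw [negMulLog, neg_mul, sum_mul, ← sum_neg_distrib]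
  refine sum_le_sum fun i hi => ?_
  rcases (hx i hi).eq_or_lt with h0 | hpos
  · simp [← h0]
  · rw [negMulLog, neg_mul, neg_le_neg_iff]
    exact mul_le_mul_of_nonneg_left (log_le_log hpos (single_le_sum hx hi)) hpos.le

theorem negMulLog_add_mul_log_le {m u v t : ℝ} (hm : 0 ≤ m) (hu : m ≤ u) (hv : m ≤ v)
    (ht : m ≤ t) : negMulLog m + m * log u + m * log v - m * log t ≤ u * v / t - m := by
  rcases hm.eq_or_lt with rfl | hm
  · simp only [negMulLog_zero, zero_mul, add_zero, sub_zero]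
    exact div_nonneg (mul_nonneg hu hv) ht
  have hu := hm.trans_le hu
  have hv := hm.trans_le hv
  have ht := hm.trans_le ht
  have hlog : log (u * v / (t * m)) = log u + log v - log t - log m := by
    rw [log_div (by positivity) (by positivity), log_mul hu.ne' hv.ne', log_mul ht.ne' hm.ne']
    ring
  have hlog_le := mul_le_mul_of_nonneg_left
    (log_le_sub_one_of_pos (by positivity : 0 < u * v / (t * m))) hm.le
  have hrhs : m * (u * v / (t * m) - 1) = u * v / t - m := by field_simp
  rw [hlog, hrhs] at hlog_le
  rw [negMulLog, neg_mul]
  linarith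

theorem sum_negMulLog_add_negMulLog_sum_le {α β : Type*} [Fintype α] [Fintype β]
    (m : α → β → ℝ) (hm : ∀ a b, 0 ≤ m a b) :
    ∑ a, ∑ b, negMulLog (m a b) + negMulLog (∑ a, ∑ b, m a b) ≤
      ∑ a, negMulLog (∑ b, m a b) + ∑ b, negMulLog (∑ a, m a b) := by
  set u := fun a => ∑ b, m a b
  set v := fun b => ∑ a, m a b
  set t := ∑ a, ∑ b, m a b
  have hu : ∀ a b, m a b ≤ u a := fun a b => single_le_sum (fun b _ => hm a b) (mem_univ b)
  have hv : ∀ a b, m a b ≤ v b := fun a b => single_le_sum (fun a _ => hm a b) (mem_univ a)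
  have ht : ∀ a b, m a b ≤ t := fun a b =>
    (hu a b).trans (single_le_sum (fun a _ => sum_nonneg fun b _ => hm a b) (mem_univ a))
  -- Gibbs' inequality for `m` against `u a * v b / t`, the product of its marginals, which has
  -- the same total mass `t`.
  have hsum := sum_le_sum fun a (_ : a ∈ univ) => sum_le_sum fun b (_ : b ∈ univ) =>
    negMulLog_add_mul_log_le (hm a b) (hu a b) (hv a b) (ht a b)
  have hu_log : ∑ a, ∑ b, m a b * log (u a) = -∑ a, negMulLog (u a) := by
    simp [negMulLog, sum_mul, u]
  have hv_log : ∑ a, ∑ b, m a b * log (v b) = -∑ b, negMulLog (v b) := by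
    rw [sum_comm]
    simp [negMulLog, sum_mul, v]
  have ht_log : ∑ a, ∑ b, m a b * log t = -negMulLog t := by
    simp [negMulLog, sum_mul, t]
  have hv_sum : ∑ b, v b = t := sum_comm
  have hr : ∑ a, ∑ b, u a * v b / t = t := by
    simp_rw [mul_div_assoc, ← mul_sum, ← sum_mul, ← sum_div, hv_sum, ← mul_div_assoc]
    exact mul_self_div_self t
  simp only [sum_add_distrib, sum_sub_distrib] at hsum
  linarith

section
variable {Ω ι κ : Type*} [Fintype Ω] (p : Ω → ℝ)

theorem mass_nonneg_s8 [DecidableEq ι] (hp : ∀ ω, 0 ≤ p ω) (T : Ω → ι) (t : ι) :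
    0 ≤ mass p T t :=
  sum_nonneg fun ω _ => by split_ifs <;> simp [hp ω]

theorem mass_comp [Fintype ι] [DecidableEq ι] [DecidableEq κ] (T : Ω → ι) (f : ι → κ) (y : κ) :
    mass p (fun ω => f (T ω)) y = ∑ t, if f t = y then mass p T t else 0 := by
  simp only [mass, ← sum_filter]
  rw [sum_fiberwise_eq_sum_filter]
  simp

theorem mass_comp_equiv [DecidableEq ι] [DecidableEq κ] (T : Ω → ι) (e : ι ≃ κ) (t : ι) :
    mass p (fun ω => e (T ω)) (e t) = mass p T t := by
  simp [mass]

theorem ent_comp_equiv [Fintype ι] [DecidableEq ι] [Fintype κ] [DecidableEq κ]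
    (T : Ω → ι) (e : ι ≃ κ) : ent p (fun ω => e (T ω)) = ent p T := by
  simp only [ent, ← e.sum_comp, mass_comp_equiv]

theorem ent_comp_le [Fintype ι] [DecidableEq ι] [Fintype κ] [DecidableEq κ]
    (hp : ∀ ω, 0 ≤ p ω) (T : Ω → ι) (f : ι → κ) :
    ent p (fun ω => f (T ω)) ≤ ent p T := by
  calc ent p (fun ω => f (T ω))
      ≤ ∑ y, ∑ t, negMulLog (if f t = y then mass p T t else 0) := by
        simp only [ent, mass_comp]
        exact sum_le_sum fun y _ => negMulLog_sum_le_sum_negMulLog _ _ fun t _ => by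
          split_ifs <;> simp [mass_nonneg_s8 p hp]
    _ = ent p T := by
        rw [ent, sum_comm]
        simp [apply_ite negMulLog]

end

section
variable {Ω α β γ : Type*} [Fintype Ω] [DecidableEq α] [DecidableEq β] [DecidableEq γ]
  (p : Ω → ℝ)

theorem sum_mass_prod_left [Fintype α] (A : Ω → α) (C : Ω → γ) (c : γ) :
    ∑ a, mass p (fun ω => (A ω, C ω)) (a, c) = mass p C c := by
  simp only [mass]
  rw [sum_comm]
  simp [Prod.ext_iff, ite_and]

theorem sum_mass_prod_mid [Fintype β] (A : Ω → α) (B : Ω → β) (C : Ω → γ) (a : α) (c : γ) :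
    ∑ b, mass p (fun ω => (A ω, B ω, C ω)) (a, b, c) = mass p (fun ω => (A ω, C ω)) (a, c) := by
  simp only [mass]
  rw [sum_comm]
  simp [Prod.ext_iff, ite_and]

theorem cmi_nonneg [Fintype α] [Fintype β] [Fintype γ] (hp : ∀ ω, 0 ≤ p ω)
    (A : Ω → α) (B : Ω → β) (C : Ω → γ) : 0 ≤ cmi p A B C := by
  set m := fun a b c => mass p (fun ω => (A ω, B ω, C ω)) (a, b, c)
  have hfiber := sum_le_sum fun c (_ : c ∈ univ) =>
    sum_negMulLog_add_negMulLog_sum_le (m · · c) fun a b => mass_nonneg_s8 p hp _ _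
  have hABC : ent p (fun ω => (A ω, B ω, C ω)) = ∑ c, ∑ a, ∑ b, negMulLog (m a b c) := by
    simp only [ent, Fintype.sum_prod_type]
    exact (sum_congr rfl fun a _ => sum_comm).trans sum_comm
  have hAC : ent p (fun ω => (A ω, C ω)) = ∑ c, ∑ a, negMulLog (∑ b, m a b c) := by
    simp only [ent, Fintype.sum_prod_type, m, sum_mass_prod_mid]
    rw [sum_comm]
  have hBC : ent p (fun ω => (B ω, C ω)) = ∑ c, ∑ b, negMulLog (∑ a, m a b c) := by
    simp only [ent, Fintype.sum_prod_type, m, sum_mass_prod_left]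
    rw [sum_comm]
  have hC : ent p C = ∑ c, negMulLog (∑ a, ∑ b, m a b c) := by
    simp only [ent, m, sum_mass_prod_mid, sum_mass_prod_left]
  simp only [sum_add_distrib] at hfiber
  simp only [cmi, condEnt]
  linarith
end

section
variable {Ω α β γ : Type*} [Fintype Ω] [Fintype α] [DecidableEq α] [Fintype β] [DecidableEq β]
  (p : Ω → ℝ)

theorem ent_prod_comm (A : Ω → α) (B : Ω → β) :
    ent p (fun ω => (A ω, B ω)) = ent p (fun ω => (B ω, A ω)) :=
  (ent_comp_equiv p (fun ω => (A ω, B ω)) (Equiv.prodComm α β)).symm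

theorem mi_comm (A : Ω → α) (B : Ω → β) : mi p A B = mi p B A := by
  simp only [mi, ent_prod_comm p A B]
  ring

theorem mi_eq_ent_of_condEnt_eq_zero {X : Ω → α} {Y : Ω → β} (h : condEnt p Y X = 0) :
    mi p X Y = ent p Y := by
  rw [mi_comm]
  simp only [condEnt] at h
  simp only [mi]
  linarith

theorem condEnt_eq_ent_of_mi_eq_zero {Y : Ω → α} {N : Ω → β} (h : mi p Y N = 0) :
    condEnt p Y N = ent p Y := by
  simp only [mi] at h
  simp only [condEnt]
  linarith

theorem mi_le_mi_of_condEnt_eq_zero [Fintype γ] [DecidableEq γ] (hp : ∀ ω, 0 ≤ p ω)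
    {X : Ω → α} {Y : Ω → β} (h : condEnt p Y X = 0) (Z : Ω → γ) : mi p Z Y ≤ mi p Z X := by
  have hcmi := cmi_nonneg p hp Z X Y
  have hproj := ent_comp_le p hp (fun ω => (Z ω, X ω, Y ω)) fun t => (t.1, t.2.1)
  have hXY := ent_prod_comm p X Y
  simp only [cmi, condEnt] at hcmi h
  simp only [mi]
  linarith

theorem mi_prod_le_condEnt_add_mi [Fintype γ] [DecidableEq γ] (hp : ∀ ω, 0 ≤ p ω)
    (Z : Ω → γ) (Y : Ω → α) (N : Ω → β) :
    mi p Z (fun ω => (Y ω, N ω)) ≤ condEnt p Y N + mi p Z N := by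
  have hproj := ent_comp_le p hp (fun ω => (Z ω, Y ω, N ω)) fun t => (t.1, t.2.2)
  simp only [mi, condEnt]
  linarith

end

theorem stmt_8_general {Ω α α' β γ δ : Type*} [Fintype Ω] [Fintype α] [DecidableEq α]
    [Fintype α'] [DecidableEq α'] [Fintype β] [DecidableEq β] [Fintype γ] [DecidableEq γ]
    [Fintype δ] [DecidableEq δ]
    (p : Ω → ℝ) (hp : ∀ ω, 0 ≤ p ω)
    (X : Ω → α) (X' : Ω → α') (Y : Ω → β) (N : Ω → γ) (ε : ℝ)
    (hYX : condEnt p Y X = 0)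
    (hYN : mi p Y N = 0)
    (hXdet : condEnt p X (fun ω => (Y ω, N ω)) = 0)
    (hmin : mi p X' N ≤ ε) :
    ∀ Xt : Ω → δ, mi p Xt Y = mi p X Y →
      cmi p (fun ω => (Y ω, N ω)) Xt X = 0 →
      mi p X' X ≤ mi p Xt X + ε := by
  intro Xt hXtY _
  have hXt : ent p Y ≤ mi p Xt X := by
    rw [← mi_eq_ent_of_condEnt_eq_zero p hYX, ← hXtY]
    exact mi_le_mi_of_condEnt_eq_zero p hp hYX Xt
  have hX' : mi p X' X ≤ ent p Y + mi p X' N :=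
    calc mi p X' X ≤ mi p X' (fun ω => (Y ω, N ω)) := mi_le_mi_of_condEnt_eq_zero p hp hXdet X'
      _ ≤ condEnt p Y N + mi p X' N := mi_prod_le_condEnt_add_mi p hp X' Y N
      _ = ent p Y + mi p X' N := by rw [condEnt_eq_ent_of_mi_eq_zero p hYN]
  linarith

theorem stmt_8 {Ω α α' β γ δ : Type*} [Fintype Ω] [Fintype α] [DecidableEq α]
    [Fintype α'] [DecidableEq α'] [Fintype β] [DecidableEq β] [Fintype γ] [DecidableEq γ]
    [Fintype δ] [DecidableEq δ]
    (p : Ω → ℝ) (hp : ∀ ω, 0 ≤ p ω) (hsum : ∑ ω, p ω = 1)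
    (X : Ω → α) (X' : Ω → α') (Y : Ω → β) (N : Ω → γ) (ε : ℝ) (hε : 0 ≤ ε)
    (hYX : condEnt p Y X = 0)
    (hYN : mi p Y N = 0)
    (hXdet : condEnt p X (fun ω => (Y ω, N ω)) = 0)
    (hsuff : mi p X' Y = mi p X Y)
    (hmin : mi p X' N ≤ ε) :
    ∀ Xt : Ω → δ, mi p Xt Y = mi p X Y →
      cmi p (fun ω => (Y ω, N ω)) Xt X = 0 →
      mi p X' X ≤ mi p Xt X + ε :=
  stmt_8_general p hp X X' Y N ε hYX hYN hXdet hmin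
end
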